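/- Let Γ be a connected graph with N vertices and k edges, and let C_Γ = C^{⊗k}/I_disc, where each tensor factor of C = (ℚ[1] → ℚ) colors an edge of Γ (degree −1 basis element = solid, degree 0 = dashed) and I_disc is the subcomplex spanned by colorings whose solid subgraph (all vertices, only solid edges) is disconnected. Then the cohomology of C_Γ is concentrated in its top degree 1 − N. -/

import Mathlib

/-!
A cochain of `C_Γ` is read off its values on the colorings whose solid subgraph is connected.
The proof is by deletion–contraction on the edge `e = 0`, splitting `C^{⊗(k+1)} = C ⊗ C^{⊗k}`
along it, for all finite vertex types at once. If `e` is a loop it does not affect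
connectivity, so `C_Γ = C ⊗ C_{Γ∖e}` is contractible. Otherwise the connected colorings with
`e` solid are those of `Γ/e` (which has one vertex less) and those with `e` dashed are those of
`Γ∖e`; a cocycle is first corrected by a coboundary so that it vanishes on the former, and the
remainder is a cocycle of `Γ∖e`.
-/

/-- The `k`-th tensor power `C^{⊗k}` of the two-term acyclic complex `C = (ℚ[1] → ℚ)`,
with basis `δ_S` for `S ⊆ {1,…,k}` the set of "solid" edges, in degree `-|S|`. -/
abbrev TPowC (k : ℕ) : Type := Finset (Fin k) → ℚ

/-- The differential of `C^{⊗k}` (replace one solid edge by a dashed one, with Koszul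
signs). -/
noncomputable def dTPow (k : ℕ) : TPowC k →ₗ[ℚ] TPowC k :=
  LinearMap.pi fun T : Finset (Fin k) =>
    ∑ e ∈ Tᶜ, ((-1 : ℚ) ^ (T.filter (fun x => x < e)).card) •
      (LinearMap.proj (insert e T) : TPowC k →ₗ[ℚ] ℚ)

/-- For a graph with `N` vertices whose edges are given by `E : Fin k → Fin N × Fin N`,
`SolidConn E S` says that the "solid subgraph" with all `N` vertices and only the edges
in `S` is connected. -/
def SolidConn {k N : ℕ} (E : Fin k → Fin N × Fin N) (S : Finset (Fin k)) : Prop :=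
  ∀ v w : Fin N,
    Relation.ReflTransGen (fun a b => ∃ t ∈ S, E t = (a, b) ∨ E t = (b, a)) v w

/-- The subcomplex `I_disc ⊆ C^{⊗k}` spanned by the edge-colorings of the graph whose
solid subgraph is disconnected. -/
noncomputable def Idisc {k N : ℕ} (E : Fin k → Fin N × Fin N) : Submodule ℚ (TPowC k) :=
  Submodule.span ℚ
    {f : TPowC k | ∃ S : Finset (Fin k), ¬ SolidConn E S ∧ f = Pi.single S (1 : ℚ)}

open Finset

section Split

variable {k : ℕ}

lemma dTPow_apply (x : TPowC k) (T : Finset (Fin k)) :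
    dTPow k x T = ∑ e ∈ Tᶜ, (-1 : ℚ) ^ #{y ∈ T | y < e} * x (insert e T) := by
  simp [dTPow]

lemma compl_map_succEmb (S : Finset (Fin k)) :
    (S.map (Fin.succEmb k))ᶜ = insert 0 (Sᶜ.map (Fin.succEmb k)) := by
  ext e
  cases e using Fin.cases <;> simp [Fin.succ_ne_zero]

lemma compl_insert_zero_map_succEmb (S : Finset (Fin k)) :
    (insert 0 (S.map (Fin.succEmb k)))ᶜ = Sᶜ.map (Fin.succEmb k) := by
  ext e
  cases e using Fin.cases <;> simp [Fin.succ_ne_zero]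

lemma exists_eq_map_succEmb_or_eq_insert_zero (T : Finset (Fin (k + 1))) :
    ∃ S : Finset (Fin k), T = S.map (Fin.succEmb k) ∨ T = insert 0 (S.map (Fin.succEmb k)) := by
  refine ⟨T.preimage Fin.succ (Fin.succ_injective k).injOn, ?_⟩
  by_cases h0 : (0 : Fin (k + 1)) ∈ T
  · right
    ext e
    cases e using Fin.cases <;> simp [h0, Fin.succ_ne_zero]
  · left
    ext e
    cases e using Fin.cases <;> simp [h0]

def restrictDashed (x : TPowC (k + 1)) : TPowC k := fun S => x (S.map (Fin.succEmb k))

def restrictSolid (x : TPowC (k + 1)) : TPowC k := fun S => x (insert 0 (S.map (Fin.succEmb k)))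

noncomputable def glue (y z : TPowC k) : TPowC (k + 1) := fun T =>
  if 0 ∈ T then z (T.preimage Fin.succ (Fin.succ_injective k).injOn)
  else y (T.preimage Fin.succ (Fin.succ_injective k).injOn)

@[simp] lemma preimage_succ_map_succEmb (S : Finset (Fin k)) :
    (S.map (Fin.succEmb k)).preimage Fin.succ (Fin.succ_injective k).injOn = S := by
  ext e
  simp

@[simp] lemma preimage_succ_insert_zero (S : Finset (Fin k)) :
    (insert 0 (S.map (Fin.succEmb k))).preimage Fin.succ (Fin.succ_injective k).injOn = S := by
  ext e
  simp [Fin.succ_ne_zero]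

@[simp] lemma glue_map_succEmb (y z : TPowC k) (S : Finset (Fin k)) :
    glue y z (S.map (Fin.succEmb k)) = y S := by
  simp [glue, Fin.succ_ne_zero]

@[simp] lemma glue_insert_zero (y z : TPowC k) (S : Finset (Fin k)) :
    glue y z (insert 0 (S.map (Fin.succEmb k))) = z S := by
  simp [glue]

@[simp] lemma restrictDashed_glue (y z : TPowC k) : restrictDashed (glue y z) = y :=
  funext (glue_map_succEmb y z)

@[simp] lemma restrictSolid_glue (y z : TPowC k) : restrictSolid (glue y z) = z :=
  funext (glue_insert_zero y z)

lemma ext_restrict {x y : TPowC (k + 1)} (hd : restrictDashed x = restrictDashed y)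
    (hs : restrictSolid x = restrictSolid y) : x = y := by
  ext T
  obtain ⟨S, rfl | rfl⟩ := exists_eq_map_succEmb_or_eq_insert_zero T
  · exact congrFun hd S
  · exact congrFun hs S

/-- Edge `0` precedes every other edge, so it contributes no Koszul sign. -/
lemma restrictDashed_dTPow (x : TPowC (k + 1)) :
    restrictDashed (dTPow (k + 1) x) = dTPow k (restrictDashed x) + restrictSolid x := by
  ext S
  simp only [restrictDashed, restrictSolid, Pi.add_apply, dTPow_apply, compl_map_succEmb]
  rw [sum_insert (by simp [Fin.succ_ne_zero]), sum_map, add_comm]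
  congr 1
  · refine sum_congr rfl fun e _ => ?_
    rw [filter_map, card_map]
    simp [Function.comp_def, Fin.succ_lt_succ_iff, map_insert]
  · simp

/-- A solid edge `0` adds one to every Koszul sign exponent. -/
lemma restrictSolid_dTPow (x : TPowC (k + 1)) :
    restrictSolid (dTPow (k + 1) x) = -dTPow k (restrictSolid x) := by
  ext S
  simp only [restrictSolid, Pi.neg_apply, dTPow_apply, compl_insert_zero_map_succEmb, sum_map,
    ← sum_neg_distrib]
  refine sum_congr rfl fun e he => ?_
  rw [Fin.coe_succEmb, filter_insert, if_pos (Fin.succ_pos e),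
    card_insert_of_notMem (by simp [Fin.succ_ne_zero]), filter_map, card_map, pow_succ]
  simp [Function.comp_def, Fin.succ_lt_succ_iff, map_insert, insert_comm]

lemma dTPow_map_succEmb (x : TPowC (k + 1)) (S : Finset (Fin k)) :
    dTPow (k + 1) x (S.map (Fin.succEmb k)) =
      dTPow k (restrictDashed x) S + x (insert 0 (S.map (Fin.succEmb k))) :=
  congrFun (restrictDashed_dTPow x) S

lemma dTPow_insert_zero (x : TPowC (k + 1)) (S : Finset (Fin k)) :
    dTPow (k + 1) x (insert 0 (S.map (Fin.succEmb k))) = -dTPow k (restrictSolid x) S :=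
  congrFun (restrictSolid_dTPow x) S

@[simp] lemma dTPow_dTPow (x : TPowC k) : dTPow k (dTPow k x) = 0 := by
  induction k with
  | zero =>
    ext T
    rw [dTPow_apply, eq_empty_of_isEmpty Tᶜ, sum_empty, Pi.zero_apply]
  | succ k ih =>
    refine ext_restrict ?_ ?_
    · rw [restrictDashed_dTPow, restrictDashed_dTPow, restrictSolid_dTPow, map_add, ih]
      ext S
      simp [restrictDashed]
    · rw [restrictSolid_dTPow, restrictSolid_dTPow, map_neg, ih]
      ext S
      simp [restrictSolid]

variable (k) in
/-- The degree `-s` part of `C^{⊗k}`. -/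
def homogeneous (s : ℕ) : Submodule ℚ (TPowC k) where
  carrier := {x | ∀ S : Finset (Fin k), #S ≠ s → x S = 0}
  add_mem' hx hy S hS := by simp [hx S hS, hy S hS]
  zero_mem' _ _ := rfl
  smul_mem' c x hx S hS := by simp [hx S hS]

variable {s : ℕ}

lemma dTPow_mem_homogeneous {x : TPowC k} (hx : x ∈ homogeneous k (s + 1)) :
    dTPow k x ∈ homogeneous k s := by
  intro T hT
  rw [dTPow_apply]
  refine sum_eq_zero fun e he => ?_
  rw [hx _ (by rw [card_insert_of_notMem (by simpa using he)]; omega), mul_zero]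

lemma restrictDashed_mem_homogeneous {x : TPowC (k + 1)} (hx : x ∈ homogeneous (k + 1) s) :
    restrictDashed x ∈ homogeneous k s :=
  fun S hS => hx _ (by simpa using hS)

lemma restrictSolid_mem_homogeneous {x : TPowC (k + 1)} (hx : x ∈ homogeneous (k + 1) (s + 1)) :
    restrictSolid x ∈ homogeneous k s :=
  fun S hS => hx _ (by rw [card_insert_of_notMem (by simp [Fin.succ_ne_zero]), card_map]; omega)

lemma glue_mem_homogeneous {y z : TPowC k} (hy : y ∈ homogeneous k (s + 1))
    (hz : z ∈ homogeneous k s) : glue y z ∈ homogeneous (k + 1) (s + 1) := by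
  intro T hT
  obtain ⟨S, rfl | rfl⟩ := exists_eq_map_succEmb_or_eq_insert_zero T
  · rw [glue_map_succEmb]
    exact hy S (by simpa using hT)
  · rw [glue_insert_zero]
    refine hz S ?_
    rw [card_insert_of_notMem (by simp [Fin.succ_ne_zero]), card_map] at hT
    omega

end Split

section Connects

variable {ι κ V : Type*} {E : ι → V × V} {S T : Finset ι}

/-- `SolidConn` for arbitrary vertex and edge types: contracting an edge changes the vertex
type. -/
def Connects (E : ι → V × V) (S : Finset ι) : Prop :=
  ∀ v w : V, Relation.ReflTransGen (fun a b => ∃ t ∈ S, E t = (a, b) ∨ E t = (b, a)) v w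

lemma connects_iff : Connects E S ↔
    ∀ P : V → Prop, (∀ t ∈ S, (P (E t).1 ↔ P (E t).2)) → ∀ v w, P v → P w := by
  refine ⟨fun h P hP v w hv => ?_, fun h v w => ?_⟩
  · induction h v w with
    | refl => exact hv
    | tail _ hab ih =>
      obtain ⟨t, ht, hE | hE⟩ := hab <;> have hPt := hP t ht <;> rw [hE] at hPt
      · exact hPt.1 ih
      · exact hPt.2 ih
  · refine h (Relation.ReflTransGen _ v) (fun t ht => ⟨fun hv => ?_, fun hv => ?_⟩) v w .refl
    · exact hv.tail ⟨t, ht, .inl rfl⟩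
    · exact hv.tail ⟨t, ht, .inr rfl⟩

lemma Connects.mono (h : Connects E S) (hST : S ⊆ T) : Connects E T :=
  fun v w => Relation.ReflTransGen.mono (fun _ _ ⟨t, ht, hE⟩ => ⟨t, hST ht, hE⟩) _ _ (h v w)

lemma connects_map (f : κ ↪ ι) {S : Finset κ} : Connects E (S.map f) ↔ Connects (E ∘ f) S := by
  simp [Connects]

lemma Connects.subsingleton (h : Connects E ∅) : Subsingleton V :=
  ⟨fun v w => connects_iff.1 h (v = ·) (by simp) v w rfl⟩

lemma Connects.erase_of_fst_eq_snd [DecidableEq ι] {e : ι} (h : Connects E T)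
    (he : (E e).1 = (E e).2) : Connects E (T.erase e) := by
  rw [connects_iff] at h ⊢
  refine fun P hP => h P fun t ht => ?_
  by_cases hte : t = e
  · rw [hte, he]
  · exact hP t (mem_erase.2 ⟨hte, ht⟩)

variable [DecidableEq V]

def collapse {a b : V} (hab : a ≠ b) (v : V) : {v : V // v ≠ b} :=
  if h : v = b then ⟨a, hab⟩ else ⟨v, h⟩

lemma collapse_of_ne {a b : V} (hab : a ≠ b) {v : V} (hv : v ≠ b) : collapse hab v = ⟨v, hv⟩ :=
  dif_neg hv

def contract (E : ι → V × V) {e : ι} (he : (E e).1 ≠ (E e).2) :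
    ι → {v : V // v ≠ (E e).2} × {v : V // v ≠ (E e).2} :=
  Prod.map (collapse he) (collapse he) ∘ E

lemma connects_insert_iff_contract [DecidableEq ι] {e : ι} (he : (E e).1 ≠ (E e).2) :
    Connects E (insert e S) ↔ Connects (contract E he) S := by
  simp only [contract, connects_iff, forall_mem_insert, Function.comp_apply, Prod.map_fst,
    Prod.map_snd]
  constructor
  · intro h P hP v w hv
    have hPe : P (collapse he (E e).1) ↔ P (collapse he (E e).2) := by
      rw [collapse_of_ne he he]
      simp [collapse]
    simpa [collapse_of_ne he w.2] using
      h (P ∘ collapse he) ⟨hPe, hP⟩ v w (by simpa [collapse_of_ne he v.2] using hv)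
  · rintro h P ⟨hPe, hP⟩ v w hv
    have hval : ∀ u, P (collapse he u) ↔ P u := by
      intro u
      by_cases hu : u = (E e).2
      · simp [collapse, hu, hPe]
      · simp [collapse_of_ne he hu]
    refine (hval w).1 (h (P ∘ Subtype.val) (fun t ht => ?_) _ _ ((hval v).2 hv))
    simpa [hval] using hP t ht

end Connects

section Cohomology

variable {V : Type*} {k s : ℕ}

/-- The cohomology of `C^{⊗k}/I_disc` vanishes in degree `-s`; a cochain is seen modulo
`I_disc` through its values on connected colorings. -/
def CohomologyVanishes (E : Fin k → V × V) (s : ℕ) : Prop :=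
  ∀ f ∈ homogeneous k s, (∀ T, Connects E T → dTPow k f T = 0) →
    ∃ g ∈ homogeneous k (s + 1), ∀ T, Connects E T → dTPow k g T = f T

lemma cohomologyVanishes_of_forall_card_ne {E : Fin k → V × V}
    (h : ∀ T, Connects E T → #T ≠ s) : CohomologyVanishes E s :=
  fun f hf _ => ⟨0, zero_mem _, fun T hT => by rw [map_zero, hf T (h T hT), Pi.zero_apply]⟩

variable {E : Fin (k + 1) → V × V}

/-- A loop does not affect connectivity, so `glue 0 ∘ restrictDashed` is a contracting
homotopy. -/
lemma cohomologyVanishes_of_fst_eq_snd (hE : (E 0).1 = (E 0).2) : CohomologyVanishes E s := by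
  intro f hf hclosed
  refine ⟨glue 0 (restrictDashed f), glue_mem_homogeneous (zero_mem _)
    (restrictDashed_mem_homogeneous hf), fun T hT => ?_⟩
  obtain ⟨S, rfl | rfl⟩ := exists_eq_map_succEmb_or_eq_insert_zero T
  · rw [dTPow_map_succEmb, restrictDashed_glue, map_zero, glue_insert_zero, Pi.zero_apply,
      zero_add, restrictDashed]
  · have hS := hclosed _ (by simpa using hT.erase_of_fst_eq_snd hE)
    rw [dTPow_map_succEmb] at hS
    rw [dTPow_insert_zero, restrictSolid_glue]
    linarith

lemma exists_dTPow_eq_of_eq_zero_on_insert_zero {r : TPowC (k + 1)}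
    (hd : CohomologyVanishes (E ∘ Fin.succEmb k) s) (hr : r ∈ homogeneous (k + 1) s)
    (hr0 : ∀ S : Finset (Fin k), Connects E (insert 0 (S.map (Fin.succEmb k))) →
      r (insert 0 (S.map (Fin.succEmb k))) = 0)
    (hclosed : ∀ T, Connects E T → dTPow (k + 1) r T = 0) :
    ∃ g ∈ homogeneous (k + 1) (s + 1), ∀ T, Connects E T → dTPow (k + 1) g T = r T := by
  obtain ⟨g, hg, hgr⟩ := hd (restrictDashed r) (restrictDashed_mem_homogeneous hr) fun S hS => by
    have hS' : Connects E (S.map (Fin.succEmb k)) := (connects_map _).2 hS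
    have := hclosed _ hS'
    rwa [dTPow_map_succEmb, hr0 S (hS'.mono (subset_insert _ _)), add_zero] at this
  refine ⟨glue g 0, glue_mem_homogeneous hg (zero_mem _), fun T hT => ?_⟩
  obtain ⟨S, rfl | rfl⟩ := exists_eq_map_succEmb_or_eq_insert_zero T
  · rw [dTPow_map_succEmb, restrictDashed_glue, glue_insert_zero, hgr S ((connects_map _).1 hT),
      Pi.zero_apply, add_zero, restrictDashed]
  · rw [dTPow_insert_zero, restrictSolid_glue, map_zero, Pi.zero_apply, neg_zero, hr0 S hT]

variable [DecidableEq V]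

lemma connects_insert_zero_iff (hE : (E 0).1 ≠ (E 0).2) {S : Finset (Fin k)} :
    Connects E (insert 0 (S.map (Fin.succEmb k))) ↔
      Connects (contract E hE ∘ Fin.succEmb k) S :=
  (connects_insert_iff_contract hE).trans (connects_map _)

lemma exists_dTPow_eq_on_insert_zero {f : TPowC (k + 1)} (hE : (E 0).1 ≠ (E 0).2)
    (hc : CohomologyVanishes (contract E hE ∘ Fin.succEmb k) s)
    (hf : f ∈ homogeneous (k + 1) (s + 1))
    (hclosed : ∀ T, Connects E T → dTPow (k + 1) f T = 0) :
    ∃ g ∈ homogeneous (k + 1) (s + 2), ∀ S : Finset (Fin k),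
      Connects E (insert 0 (S.map (Fin.succEmb k))) →
        dTPow (k + 1) g (insert 0 (S.map (Fin.succEmb k))) =
          f (insert 0 (S.map (Fin.succEmb k))) := by
  obtain ⟨g, hg, hgf⟩ := hc (restrictSolid f) (restrictSolid_mem_homogeneous hf) fun S hS => by
    simpa [dTPow_insert_zero] using hclosed _ ((connects_insert_zero_iff hE).2 hS)
  refine ⟨glue 0 (-g), glue_mem_homogeneous (zero_mem _) (neg_mem hg), fun S hS => ?_⟩
  rw [dTPow_insert_zero, restrictSolid_glue, map_neg, Pi.neg_apply, neg_neg,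
    hgf S ((connects_insert_zero_iff hE).1 hS), restrictSolid]

lemma CohomologyVanishes.of_contract_of_delete (hE : (E 0).1 ≠ (E 0).2)
    (hc : CohomologyVanishes (contract E hE ∘ Fin.succEmb k) s)
    (hd : CohomologyVanishes (E ∘ Fin.succEmb k) (s + 1)) : CohomologyVanishes E (s + 1) := by
  intro f hf hclosed
  obtain ⟨g₁, hg₁, hg₁f⟩ := exists_dTPow_eq_on_insert_zero hE hc hf hclosed
  obtain ⟨g₀, hg₀, hg₀f⟩ := exists_dTPow_eq_of_eq_zero_on_insert_zero (r := f - dTPow (k + 1) g₁)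
    hd (sub_mem hf (dTPow_mem_homogeneous hg₁)) (fun S hS => by simp [hg₁f S hS])
    (fun T hT => by simp [hclosed T hT])
  exact ⟨g₁ + g₀, add_mem hg₁ hg₀, fun T hT => by simp [hg₀f T hT]⟩

/-- Without edges only `|V| ≤ 1` is connected, and contraction lowers both `|V|` and the
degree by one. -/
theorem cohomologyVanishes_of_ne_card_sub_one [Fintype V] (E : Fin k → V × V)
    (hs : s ≠ Fintype.card V - 1) : CohomologyVanishes E s := by
  induction k generalizing V s with
  | zero =>
    refine cohomologyVanishes_of_forall_card_ne fun T hT => ?_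
    rw [eq_empty_of_isEmpty T] at hT ⊢
    have := Fintype.card_le_one_iff_subsingleton.2 hT.subsingleton
    simp only [card_empty]
    omega
  | succ k ih =>
    by_cases hloop : (E 0).1 = (E 0).2
    · exact cohomologyVanishes_of_fst_eq_snd hloop
    cases s with
    | zero =>
      refine cohomologyVanishes_of_forall_card_ne fun T hT hT0 => hloop ?_
      rw [card_eq_zero] at hT0
      exact (hT0 ▸ hT).subsingleton.elim _ _
    | succ s =>
      have hcard : Fintype.card {v // v ≠ (E 0).2} = Fintype.card V - 1 := Set.card_ne_eq _
      have : 0 < Fintype.card {v // v ≠ (E 0).2} := Fintype.card_pos_iff.2 ⟨⟨_, hloop⟩⟩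
      exact .of_contract_of_delete hloop (ih _ (by omega)) (ih _ hs)

end Cohomology

section Quotient

variable {k N : ℕ} {E : Fin k → Fin N × Fin N}

lemma mem_Idisc_iff {x : TPowC k} : x ∈ Idisc E ↔ ∀ S, SolidConn E S → x S = 0 := by
  classical
  have : {f : TPowC k | ∃ S, ¬SolidConn E S ∧ f = Pi.single S 1} =
      Pi.basisFun ℚ (Finset (Fin k)) '' {S | ¬SolidConn E S} := by
    ext f
    simp [eq_comm]
  rw [Idisc, this, Module.Basis.mem_span_image]
  simp [Set.subset_def, not_imp_not]

lemma mkQ_Idisc_eq_iff {x y : TPowC k} :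
    (Idisc E).mkQ x = (Idisc E).mkQ y ↔ ∀ S, SolidConn E S → x S = y S := by
  simp [Submodule.Quotient.eq, mem_Idisc_iff, sub_eq_zero]

end Quotient

theorem stmt_11_general (k N : ℕ) (E : Fin k → Fin N × Fin N)
    (D : (TPowC k ⧸ Idisc E) →ₗ[ℚ] (TPowC k ⧸ Idisc E))
    (hD : D.comp (Idisc E).mkQ = (Idisc E).mkQ.comp (dTPow k)) :
    ∀ s : ℕ, s ≠ N - 1 →
      ∀ f : TPowC k, (∀ S : Finset (Fin k), S.card ≠ s → f S = 0) →
        D ((Idisc E).mkQ f) = 0 →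
        ∃ g : TPowC k, (∀ S : Finset (Fin k), S.card ≠ s + 1 → g S = 0) ∧
          D ((Idisc E).mkQ g) = (Idisc E).mkQ f := by
  intro s hs f hf hclosed
  have hDmk (x : TPowC k) : D ((Idisc E).mkQ x) = (Idisc E).mkQ (dTPow k x) :=
    LinearMap.congr_fun hD x
  rw [hDmk, ← map_zero (Idisc E).mkQ, mkQ_Idisc_eq_iff] at hclosed
  obtain ⟨g, hg, hgf⟩ :=
    cohomologyVanishes_of_ne_card_sub_one E (by simpa using hs) f hf hclosed
  exact ⟨g, hg, by rw [hDmk, mkQ_Idisc_eq_iff]; exact hgf⟩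

/-- let `Γ` be a connected graph with `N ≥ 1` vertices and `k` edges, and
let `C_Γ = C^{⊗k}/I_disc` with its induced differential `D`. Then the cohomology of
`C_Γ` is concentrated in the top degree `1 - N`: in every degree `-s` with `s ≠ N - 1`,
each closed element of `C_Γ` represented by an element supported in cardinality `s` is
the differential of a class represented in cardinality `s + 1`. -/
theorem stmt_11 (k N : ℕ) (hN : 1 ≤ N) (E : Fin k → Fin N × Fin N)
    (hconn : SolidConn E Finset.univ)
    (D : (TPowC k ⧸ Idisc E) →ₗ[ℚ] (TPowC k ⧸ Idisc E))
    (hD : D.comp (Idisc E).mkQ = (Idisc E).mkQ.comp (dTPow k)) :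
    ∀ s : ℕ, s ≠ N - 1 →
      ∀ f : TPowC k, (∀ S : Finset (Fin k), S.card ≠ s → f S = 0) →
        D ((Idisc E).mkQ f) = 0 →
        ∃ g : TPowC k, (∀ S : Finset (Fin k), S.card ≠ s + 1 → g S = 0) ∧
          D ((Idisc E).mkQ g) = (Idisc E).mkQ f :=
  stmt_11_general k N E D hD
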